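/- arXiv:2604.00511 — 4 statements merged into one kernel-verified Lean document; each statement's English description precedes it below -/
import Mathlib

section
/- Let R be a commutative ring and n a positive integer that is invertible in R (i.e. the image of n in R is a unit). If u ∈ R satisfies u^n = 1 and u - 1 is nilpotent, then u = 1. -/
/-!
Since `u ^ n = 1`, the geometric sum `1 + u + ⋯ + u ^ (n - 1)` annihilates `u - 1`. That sum is
congruent to `n` modulo the nilpotent element `u - 1`, so it is a unit, and hence `u - 1 = 0`.
-/

open Finset

theorem sub_one_dvd_geom_sum_sub_natCast {R : Type*} [Ring R] (u : R) (n : ℕ) :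
    u - 1 ∣ ∑ i ∈ range n, u ^ i - n := by
  have hsum : ∑ i ∈ range n, u ^ i - n = ∑ i ∈ range n, (u ^ i - 1) := by
    rw [sum_sub_distrib, sum_const, card_range, nsmul_one]
  rw [hsum]
  exact dvd_sum fun i _ ↦ sub_one_dvd_pow_sub_one u i

theorem isUnit_geom_sum_of_isNilpotent_sub_one {R : Type*} [CommRing R] {u : R} {n : ℕ}
    (hn : IsUnit (n : R)) (hu : IsNilpotent (u - 1)) : IsUnit (∑ i ∈ range n, u ^ i) := by
  obtain ⟨c, hc⟩ := sub_one_dvd_geom_sum_sub_natCast u n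
  have hnil : IsNilpotent ((u - 1) * c) := (Commute.all _ c).isNilpotent_mul_right hu
  rw [← sub_add_cancel (∑ i ∈ range n, u ^ i) n, hc]
  exact hnil.isUnit_add_right_of_commute hn (Commute.all _ _)

theorem root_of_unity_eq_one_of_nilpotent_sub_one_general
    {R : Type*} [CommRing R] (n : ℕ) (hunit : IsUnit (n : R))
    (u : R) (hu : u ^ n = 1) (hnil : IsNilpotent (u - 1)) : u = 1 := by
  have hgeom : (∑ i ∈ range n, u ^ i) * (u - 1) = 0 := by
    rw [geom_sum_mul, hu, sub_self]
  exact sub_eq_zero.mp <|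
    (isUnit_geom_sum_of_isNilpotent_sub_one hunit hnil).mul_right_eq_zero.mp hgeom

/-- Let `R` be a commutative ring and `n` a positive integer that is invertible in `R`.
If `u ∈ R` satisfies `u ^ n = 1` and `u - 1` is nilpotent, then `u = 1`. -/
theorem root_of_unity_eq_one_of_nilpotent_sub_one
    {R : Type*} [CommRing R] (n : ℕ) (hn : 0 < n) (hunit : IsUnit (n : R))
    (u : R) (hu : u ^ n = 1) (hnil : IsNilpotent (u - 1)) : u = 1 :=
  root_of_unity_eq_one_of_nilpotent_sub_one_general n hunit u hu hnil
end

section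
/- Let A be a commutative Artinian local ring, let I be an ideal of A contained in the maximal ideal of A, and let n be a positive integer that is invertible in A. Then the quotient map A → A/I induces an isomorphism of groups μ_n(A) → μ_n(A/I), where μ_n(R) denotes the group of n-th roots of unity of a commutative ring R. -/
/-!
Every element of `I` is nilpotent, because the maximal ideal of an Artinian local ring is its
nilradical. Since `n` is invertible, `X ^ n - 1` has the unit derivative `n X ^ (n - 1)` at every
unit, so Newton's iteration started at a lift of a root of unity of `A ⧸ I` stays in the lift's
class modulo `I` and reaches a root of unity of `A` after finitely many steps; the uniqueness of
roots of `X ^ n - 1` up to nilpotents gives injectivity.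
-/

open Polynomial

namespace Polynomial

variable {R S : Type*} [CommRing R] [CommRing S] [Algebra R S] {P : R[X]} {I : Ideal S} {x y : S}

theorem aeval_sub_aeval_mem_of_sub_mem (h : x - y ∈ I) : aeval x P - aeval y P ∈ I := by
  rw [← Ideal.Quotient.eq, ← Ideal.Quotient.mkₐ_eq_mk R, ← aeval_algHom_apply,
    ← aeval_algHom_apply, Ideal.Quotient.mkₐ_eq_mk, Ideal.Quotient.eq.mpr h]

theorem newtonMap_sub_mem (h : aeval x P ∈ I) : P.newtonMap x - x ∈ I := by
  rw [newtonMap_apply, sub_sub_cancel_left]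
  exact I.neg_mem (I.mul_mem_left _ h)

theorem iterate_newtonMap_sub_mem (h : aeval x P ∈ I) (k : ℕ) :
    P.newtonMap^[k] x - x ∈ I := by
  induction k with
  | zero => simp
  | succ k ih =>
    rw [Function.iterate_succ_apply', ← sub_add_sub_cancel _ (P.newtonMap^[k] x)]
    refine I.add_mem (newtonMap_sub_mem ?_) ih
    simpa using I.add_mem (aeval_sub_aeval_mem_of_sub_mem (P := P) ih) h

theorem exists_aeval_eq_zero_and_sub_mem (hnil : IsNilpotent (aeval x P)) (hmem : aeval x P ∈ I)
    (h' : IsUnit (aeval x (derivative P))) : ∃ r, aeval r P = 0 ∧ r - x ∈ I := by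
  obtain ⟨k, hk⟩ := hnil
  refine ⟨P.newtonMap^[k] x, ?_, iterate_newtonMap_sub_mem hmem k⟩
  rw [← zero_dvd_iff, ← pow_eq_zero_of_le k.lt_two_pow_self.le hk]
  exact aeval_pow_two_pow_dvd_aeval_iterate_newtonMap ⟨k, hk⟩ h' k

end Polynomial

section RootsOfUnity

variable {A : Type*} [CommRing A] {n : ℕ}

theorem isUnit_aeval_derivative_X_pow_sub_one (hn : IsUnit (n : A)) {x : A} (hx : IsUnit x) :
    IsUnit (aeval x (derivative (X ^ n - 1 : A[X]))) := by
  simpa [derivative_X_pow] using hn.mul (hx.pow (n - 1))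

theorem eq_one_of_pow_eq_one_of_isNilpotent_sub_one (hn : IsUnit (n : A)) {ζ : A}
    (hζ : ζ ^ n = 1) (h : IsNilpotent (ζ - 1)) : ζ = 1 :=
  (existsUnique_nilpotent_sub_and_aeval_eq_zero (P := X ^ n - 1) (x := (1 : A)) (by simp)
    (isUnit_aeval_derivative_X_pow_sub_one hn isUnit_one)).unique
    ⟨by rwa [← neg_sub, isNilpotent_neg_iff], by simp [hζ]⟩ ⟨by simp, by simp⟩

theorem exists_pow_eq_one_and_sub_mem {I : Ideal A} (hI : I ≤ nilradical A)
    (hn : IsUnit (n : A)) {a : A} (ha : IsUnit a) (h : a ^ n - 1 ∈ I) :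
    ∃ r : Aˣ, r ^ n = 1 ∧ (r : A) - a ∈ I := by
  obtain ⟨r, hr, hra⟩ := exists_aeval_eq_zero_and_sub_mem (P := X ^ n - 1)
    (by simpa using mem_nilradical.mp (hI h)) (by simpa using h)
    (isUnit_aeval_derivative_X_pow_sub_one hn ha)
  have hrU : IsUnit r := by
    simpa using (mem_nilradical.mp (hI hra)).isUnit_add_left_of_commute ha (Commute.all _ _)
  exact ⟨hrU.unit, Units.ext (by simpa [sub_eq_zero] using hr), hra⟩

theorem restrictRootsOfUnity_quotientMk_bijective {I : Ideal A} (hI : I ≤ nilradical A)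
    (hn : IsUnit (n : A)) :
    Function.Bijective (restrictRootsOfUnity (Ideal.Quotient.mk I) n) := by
  refine ⟨(injective_iff_map_eq_one _).mpr fun ζ hζ ↦ ?_, fun ζ ↦ ?_⟩
  · have hζI : ((ζ : Aˣ) : A) - 1 ∈ I := by
      rw [← Ideal.Quotient.eq, map_one]
      exact Units.ext_iff.mp (Subtype.ext_iff.mp hζ)
    ext
    exact eq_one_of_pow_eq_one_of_isNilpotent_sub_one hn ((mem_rootsOfUnity' n _).mp ζ.2)
      (mem_nilradical.mp (hI hζI))
  · obtain ⟨a, ha⟩ := Ideal.Quotient.mk_surjective ((ζ : (A ⧸ I)ˣ) : A ⧸ I)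
    have := isLocalHom_of_le_jacobson_bot I (hI.trans Ideal.radical_le_jacobson)
    have haU : IsUnit a := isUnit_of_map_unit (Ideal.Quotient.mk I) a (ha ▸ ζ.val.isUnit)
    have haI : a ^ n - 1 ∈ I := by
      rw [← Ideal.Quotient.eq, map_pow, ha, map_one]
      exact (mem_rootsOfUnity' n _).mp ζ.2
    obtain ⟨r, hr, hra⟩ := exists_pow_eq_one_and_sub_mem hI hn haU haI
    refine ⟨⟨r, hr⟩, ?_⟩
    ext
    simp [Ideal.Quotient.eq.mpr hra, ha]

end RootsOfUnity

theorem rootsOfUnity_quotient_bijective_general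
    {A : Type*} [CommRing A] [IsArtinianRing A] [IsLocalRing A]
    (I : Ideal A) (hI : I ≤ IsLocalRing.maximalIdeal A)
    (n : ℕ) (hunit : IsUnit (n : A)) :
    Function.Bijective (restrictRootsOfUnity (Ideal.Quotient.mk I) n) :=
  restrictRootsOfUnity_quotientMk_bijective
    (hI.trans (Ring.KrullDimLE.nilradical_eq_maximalIdeal A).ge) hunit

/-- Let `A` be a commutative Artinian local ring, `I` an ideal contained in the maximal
ideal, and `n` a positive integer invertible in `A`. Then the quotient map `A → A ⧸ I`
induces an isomorphism `μ_n(A) → μ_n(A ⧸ I)` on groups of `n`-th roots of unity. -/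
theorem rootsOfUnity_quotient_bijective
    {A : Type*} [CommRing A] [IsArtinianRing A] [IsLocalRing A]
    (I : Ideal A) (hI : I ≤ IsLocalRing.maximalIdeal A)
    (n : ℕ) (hn : 0 < n) (hunit : IsUnit (n : A)) :
    Function.Bijective (restrictRootsOfUnity (Ideal.Quotient.mk I) n) :=
  rootsOfUnity_quotient_bijective_general I hI n hunit
end

section
/- Let A be a commutative Noetherian local ring that is adically complete with respect to its maximal ideal, let κ be its residue field, and let n be a positive integer that is invertible in A. Then the residue map A → κ induces an isomorphism of groups μ_n(A) → μ_n(κ), where μ_n(R) denotes the group of n-th roots of unity of a commutative ring R. -/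
/-!
If `ζ ^ n = 1` and `ζ ≡ 1` modulo the maximal ideal, then `(ζ - 1) (1 + ζ + ⋯ + ζ ^ (n - 1)) = 0`
and the second factor is congruent to the unit `n`, so `ζ = 1`: this gives injectivity. A complete
local ring is Henselian, and since `n` is invertible every root of `X ^ n - 1` in the residue field
is simple, so Hensel's lemma lifts it to a root in `A`: this gives surjectivity.
-/

open IsLocalRing Polynomial

section

variable {A : Type*} [CommRing A] {n : ℕ}

theorem IsLocalRing.eq_one_of_pow_eq_one_of_residue_eq_one [IsLocalRing A]
    (hunit : IsUnit (n : A)) {x : A} (hx : x ^ n = 1) (hres : residue A x = 1) : x = 1 := by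
  have hsum : IsUnit (∑ i ∈ Finset.range n, x ^ i) := by
    rw [← isUnit_map_iff (residue A), map_sum]
    simp only [map_pow, hres, one_pow, Finset.sum_const, Finset.card_range, nsmul_one]
    simpa using hunit.map (residue A)
  have hfactor : (∑ i ∈ Finset.range n, x ^ i) * (x - 1) = 0 := by
    rw [geom_sum_mul, hx, sub_self]
  exact sub_eq_zero.mp (hsum.mul_right_eq_zero.mp hfactor)

theorem restrictRootsOfUnity_residue_injective [IsLocalRing A] (hunit : IsUnit (n : A)) :
    Function.Injective (restrictRootsOfUnity (residue A) n) := by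
  refine (injective_iff_map_eq_one _).mpr fun ζ hζ ↦ Subtype.ext <| Units.ext ?_
  refine eq_one_of_pow_eq_one_of_residue_eq_one hunit ((mem_rootsOfUnity' n _).mp ζ.prop) ?_
  simpa using Units.ext_iff.mp (Subtype.ext_iff.mp hζ)

theorem HenselianRing.exists_pow_eq_one_sub_mem (I : Ideal A) [HenselianRing A I] (hn : n ≠ 0)
    (hunit : IsUnit (n : A)) {a₀ : A} (ha₀ : a₀ ^ n - 1 ∈ I) : ∃ a : A, a ^ n = 1 ∧ a - a₀ ∈ I := by
  have hroot : Ideal.Quotient.mk I a₀ ^ n = 1 := by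
    rw [← map_pow, ← sub_eq_zero, ← map_one (Ideal.Quotient.mk I), ← map_sub,
      Ideal.Quotient.eq_zero_iff_mem]
    exact ha₀
  have hderiv : IsUnit (Ideal.Quotient.mk I ((X ^ n - C 1 : A[X]).derivative.eval a₀)) := by
    simp only [derivative_sub, derivative_X_pow, derivative_C, sub_zero, eval_mul, eval_C,
      eval_pow, eval_X, map_mul, map_pow]
    exact (hunit.map _).mul ((IsUnit.of_pow_eq_one hroot hn).pow _)
  obtain ⟨a, ha, haI⟩ := HenselianRing.is_henselian (X ^ n - C 1) (monic_X_pow_sub_C 1 hn) a₀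
    (by simpa using ha₀) hderiv
  exact ⟨a, by simpa [sub_eq_zero] using ha, haI⟩

theorem restrictRootsOfUnity_residue_surjective [IsLocalRing A]
    [HenselianRing A (maximalIdeal A)] [NeZero n] (hunit : IsUnit (n : A)) :
    Function.Surjective (restrictRootsOfUnity (residue A) n) := by
  intro ζ
  obtain ⟨a₀, ha₀⟩ := residue_surjective ((ζ : (ResidueField A)ˣ) : ResidueField A)
  have hlift : a₀ ^ n - 1 ∈ maximalIdeal A := by
    rw [← residue_eq_zero_iff, map_sub, map_pow, ha₀, map_one, sub_eq_zero]
    exact (mem_rootsOfUnity' n _).mp ζ.prop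
  obtain ⟨a, ha, haa₀⟩ :=
    HenselianRing.exists_pow_eq_one_sub_mem _ (NeZero.ne n) hunit hlift
  refine ⟨rootsOfUnity.mkOfPowEq a ha, Subtype.ext <| Units.ext ?_⟩
  rw [restrictRootsOfUnity_coe_apply, rootsOfUnity.coe_mkOfPowEq, ← ha₀, ← sub_eq_zero,
    ← map_sub, residue_eq_zero_iff]
  exact haa₀

end

theorem rootsOfUnity_residue_bijective_general
    {A : Type*} [CommRing A] [IsLocalRing A]
    [IsAdicComplete (IsLocalRing.maximalIdeal A) A]
    (n : ℕ) (hn : 0 < n) (hunit : IsUnit (n : A)) :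
    Function.Bijective (restrictRootsOfUnity (IsLocalRing.residue A) n) :=
  have : NeZero n := NeZero.of_pos hn
  ⟨restrictRootsOfUnity_residue_injective hunit, restrictRootsOfUnity_residue_surjective hunit⟩

/-- Let `A` be a commutative Noetherian local ring which is adically complete with respect
to its maximal ideal, with residue field `κ`, and let `n` be a positive integer invertible
in `A`. Then the residue map `A → κ` induces an isomorphism `μ_n(A) → μ_n(κ)`. -/
theorem rootsOfUnity_residue_bijective
    {A : Type*} [CommRing A] [IsNoetherianRing A] [IsLocalRing A]
    [IsAdicComplete (IsLocalRing.maximalIdeal A) A]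
    (n : ℕ) (hn : 0 < n) (hunit : IsUnit (n : A)) :
    Function.Bijective (restrictRootsOfUnity (IsLocalRing.residue A) n) :=
  rootsOfUnity_residue_bijective_general n hn hunit
end

section
/- Let A be a commutative Noetherian local ring that is adically complete with respect to its maximal ideal, let κ be its residue field, and let n be a positive integer that is invertible in A. Let G be a finite group, and regard the groups μ_n(A) and μ_n(κ) of n-th roots of unity as abelian groups with trivial G-action. Then for every d ≥ 1, the map H^d(G, μ_n(A)) → H^d(G, μ_n(κ)) on group cohomology induced by the residue map A → κ is an isomorphism. -/
open CategoryTheory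

universe u

/-- The morphism of trivial `G`-representations induced by a linear map between
the coefficient modules. -/
def Rep.trivialHom {k G : Type u} [CommRing k] [Group G] {V W : Type u}
    [AddCommGroup V] [Module k V] [AddCommGroup W] [Module k W] (f : V →ₗ[k] W) :
    Rep.trivial k G V ⟶ Rep.trivial k G W :=
  Rep.ofHom ⟨f, fun _ => rfl⟩

/-- The map on group cohomology induced by a morphism of representations, defined via
the identification `groupCohomologyIsoExt` of group cohomology with `Ext` groups, which
are functorial in the second variable. -/
noncomputable def groupCohomologyMap {k G : Type u} [CommRing k] [Group G]
    {A B : Rep k G} (f : A ⟶ B) (n : ℕ) :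
    groupCohomology A n ⟶ groupCohomology B n :=
  (groupCohomologyIsoExt A n).hom ≫
    ((Ext k (Rep k G) n).obj (Opposite.op <| Rep.trivial k G k)).map f ≫
    (groupCohomologyIsoExt B n).inv

open IsLocalRing Polynomial

/-! Over a local ring in which `n` is invertible, `X ^ n - 1` is separable modulo the maximal
ideal, so Hensel's lemma makes reduction a bijection `μ_n(A) ≃ μ_n(κ)`; cohomology with
trivial coefficients is functorial, so it turns this isomorphism of coefficients into an
isomorphism in every degree. -/

theorem HenselianLocalRing.of_henselianRing_maximalIdeal {R : Type*} [CommRing R]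
    [IsLocalRing R] [HenselianRing R (maximalIdeal R)] : HenselianLocalRing R where
  is_henselian f hf a₀ h₁ h₂ := HenselianRing.is_henselian f hf a₀ h₁ (h₂.map _)

section RootsOfUnity

variable {A : Type*} [CommRing A] {n : ℕ}

theorem injective_restrictRootsOfUnity_residue [IsLocalRing A] (hn : IsUnit (n : A)) :
    Function.Injective (restrictRootsOfUnity (residue A) n) := by
  rw [injective_iff_map_eq_one]
  intro ζ hζ
  set x : A := ((ζ : Aˣ) : A)
  have hxn : x ^ n = 1 := (mem_rootsOfUnity' n _).mp ζ.2
  have hres : residue A x = 1 := by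
    rw [Subtype.ext_iff, Units.ext_iff] at hζ
    simpa using hζ
  have hx1 : ¬IsUnit (x - 1) := by
    rwa [← mem_nonunits_iff, ← mem_maximalIdeal, ← residue_eq_zero_iff, map_sub, sub_eq_zero,
      map_one]
  have hsimple : IsUnit ((X ^ n - 1 : A[X]).derivative.eval x) := by
    simpa [derivative_X_pow] using hn.mul ((ζ : Aˣ).isUnit.pow (n - 1))
  ext
  exact eq_of_eval_eq_zero_of_not_isUnit_sub (f := X ^ n - 1)
    (by simpa [sub_eq_zero] using hxn) (by simp) hx1 hsimple

theorem surjective_restrictRootsOfUnity_residue [HenselianLocalRing A] (hn : IsUnit (n : A)) :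
    Function.Surjective (restrictRootsOfUnity (residue A) n) := by
  have : NeZero n := ⟨by rintro rfl; simp at hn⟩
  intro ξ
  set x : ResidueField A := ((ξ : (ResidueField A)ˣ) : ResidueField A)
  have hxn : x ^ n = 1 := (mem_rootsOfUnity' n _).mp ξ.2
  have hmonic : (X ^ n - 1 : A[X]).Monic := by
    simpa using monic_X_pow_sub_C (1 : A) (NeZero.ne n)
  have hroot : aeval x (X ^ n - 1 : A[X]) = 0 := by simp [hxn]
  have hsimple : aeval x (derivative (X ^ n - 1 : A[X])) ≠ 0 := by
    simpa [derivative_X_pow, x] using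
      ((hn.map (residue A)).mul ((ξ : (ResidueField A)ˣ).isUnit.pow (n - 1))).ne_zero
  have lift_simple_root := ((HenselianLocalRing.TFAE A).out 0 1).mp ‹_›
  obtain ⟨a, ha, hres⟩ := lift_simple_root _ hmonic x hroot hsimple
  refine ⟨rootsOfUnity.mkOfPowEq a (by simpa [sub_eq_zero] using ha), ?_⟩
  ext
  simpa using hres

theorem bijective_restrictRootsOfUnity_residue [HenselianLocalRing A] (hn : IsUnit (n : A)) :
    Function.Bijective (restrictRootsOfUnity (residue A) n) :=
  ⟨injective_restrictRootsOfUnity_residue hn, surjective_restrictRootsOfUnity_residue hn⟩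

end RootsOfUnity

theorem Rep.isIso_trivialHom {k G : Type u} [CommRing k] [Group G] {V W : Type u}
    [AddCommGroup V] [Module k V] [AddCommGroup W] [Module k W] (f : V →ₗ[k] W)
    (hf : Function.Bijective f) : IsIso (Rep.trivialHom (G := G) f) := by
  let e := LinearEquiv.ofBijective f hf
  refine ⟨Rep.trivialHom e.symm.toLinearMap, ?_, ?_⟩
  · ext x
    exact e.symm_apply_apply x
  · ext x
    exact e.apply_symm_apply x

instance isIso_groupCohomologyMap {k G : Type u} [CommRing k] [Group G] {A B : Rep k G}
    (f : A ⟶ B) [IsIso f] (n : ℕ) : IsIso (groupCohomologyMap f n) := by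
  unfold groupCohomologyMap
  infer_instance

theorem bijective_groupCohomologyMap_rootsOfUnity_residue_general
    {A : Type} [CommRing A] [IsLocalRing A]
    [IsAdicComplete (IsLocalRing.maximalIdeal A) A]
    (n : ℕ) (hunit : IsUnit (n : A))
    {G : Type} [Group G] (d : ℕ) :
    Function.Bijective (groupCohomologyMap (G := G) (Rep.trivialHom
      ((MonoidHom.toAdditive
        (restrictRootsOfUnity (IsLocalRing.residue A) n)).toIntLinearMap)) d) := by
  have : HenselianLocalRing A := .of_henselianRing_maximalIdeal
  have := Rep.isIso_trivialHom (G := G)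
    (MonoidHom.toAdditive (restrictRootsOfUnity (residue A) n)).toIntLinearMap
    (bijective_restrictRootsOfUnity_residue hunit)
  exact ConcreteCategory.bijective_of_isIso _

/-- Let `A` be a commutative Noetherian local ring, adically complete with respect to its
maximal ideal, with residue field `κ`, and let `n` be a positive integer invertible in `A`.
Let `G` be a finite group acting trivially on `μ_n(A)` and `μ_n(κ)`. Then for every `d ≥ 1`,
the map `H^d(G, μ_n(A)) → H^d(G, μ_n(κ))` induced by the residue map `A → κ` is an
isomorphism. -/
theorem bijective_groupCohomologyMap_rootsOfUnity_residue
    {A : Type} [CommRing A] [IsNoetherianRing A] [IsLocalRing A]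
    [IsAdicComplete (IsLocalRing.maximalIdeal A) A]
    (n : ℕ) (hn : 0 < n) (hunit : IsUnit (n : A))
    {G : Type} [Group G] [Finite G] (d : ℕ) (hd : 1 ≤ d) :
    Function.Bijective (groupCohomologyMap (G := G) (Rep.trivialHom
      ((MonoidHom.toAdditive
        (restrictRootsOfUnity (IsLocalRing.residue A) n)).toIntLinearMap)) d) :=
  bijective_groupCohomologyMap_rootsOfUnity_residue_general n hunit d
end
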